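/- Dual bijection: with the same hypotheses, fixing σ ∈ Σ_0^{(q)}(Δ, k−n), the restriction map α ↦ (α_i)_{i∈N} is a bijection between Σ_{N,n,−σ}(d,k) = {α ∈ Σ(d,k) : N(α)=N, n(α)=n, α_i = σ_i for i∈Δ} and Σ(N,n), the set of all θ: N → ℕ with ∑ θ_i = n. -/
import Mathlib


/-- `N(α) = N`: `N` is the unique subset of `{0,...,d}` of maximal cardinality with
`∑_{i∈N} α i ≤ r (card N)` (with `N = ∅` allowed). -/
def isNset (d : ℕ) (r : ℕ → ℕ) (α : Fin (d + 1) → ℕ) (N : Finset (Fin (d + 1))) : Prop :=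
  (N = ∅ ∨ ∑ i ∈ N, α i ≤ r N.card) ∧
  ∀ M : Finset (Fin (d + 1)), N.card < M.card → M.card ≤ d → r M.card < ∑ i ∈ M, α i

/-- `Σ_0^{(q)}(Δ, m)`: functions supported on `Δ` with entries summing to `m` such that every
nonempty proper subset `M ⊆ Δ` of size `t` has entry sum `> q t`. -/
def sigmaZero (d : ℕ) (q : ℕ → ℕ) (Δ : Finset (Fin (d + 1))) (m : ℕ) :
    Set (Fin (d + 1) → ℕ) :=
  {β | (∀ i ∉ Δ, β i = 0) ∧ ∑ i ∈ Δ, β i = m ∧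
    ∀ M ⊆ Δ, M.Nonempty → M ⊂ Δ → q M.card < ∑ i ∈ M, β i}

lemma rmono {d : ℕ} {r : ℕ → ℕ} (hr : ∀ s, 1 ≤ s → s + 1 ≤ d → 2 * r s ≤ r (s + 1)) :
    ∀ a b, 1 ≤ a → a ≤ b → b ≤ d → r a ≤ r b := by
  intro a b ha hab hbd
  induction b with
  | zero => omega
  | succ b ih =>
    rcases Nat.lt_or_ge a (b + 1) with h | h
    · have h1 : r a ≤ r b := ih (by omega) (by omega)
      have h2 : 2 * r b ≤ r (b + 1) := hr b (by omega) (by omega)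
      omega
    · have : a = b + 1 := by omega
      exact le_of_eq (by rw [this])

/-- Dual bijection: fixing `σ ∈ Σ_0^{(q)}(Δ, k − n)` with `Δ = Nᶜ` and
`q t = r (t + card N) − n`, the restriction map `α ↦ (α_i)_{i∈N}` is a bijection between
`Σ_{N,n,−σ}(d,k)` and `Σ(N,n)`, the set of `θ : N → ℕ` with `∑ θ = n`. -/
theorem restriction_bijection_dual (d k : ℕ) (r : ℕ → ℕ)
    (hr : ∀ s, 1 ≤ s → s + 1 ≤ d → 2 * r s ≤ r (s + 1)) (hk : 2 * r d + 1 ≤ k)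
    (N : Finset (Fin (d + 1))) (hN : N ⊂ Finset.univ)
    (n : ℕ) (hn : n ≤ r N.card)
    (σ : Fin (d + 1) → ℕ)
    (hσ : σ ∈ sigmaZero d (fun t => r (t + N.card) - n) Nᶜ (k - n)) :
    Set.BijOn (fun α i => if i ∈ N then α i else 0)
      {α : Fin (d + 1) → ℕ | ∑ i, α i = k ∧ isNset d r α N ∧
        (∑ i ∈ N, α i = n) ∧ ∀ i ∈ Nᶜ, α i = σ i}
      {θ : Fin (d + 1) → ℕ | (∀ i ∉ N, θ i = 0) ∧ ∑ i ∈ N, θ i = n} := by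
  obtain ⟨hσ0, hσsum, hσsub⟩ := hσ
  have hsd : N.card ≤ d := by
    have h1 := Finset.card_lt_card hN
    simp only [Finset.card_univ, Fintype.card_fin] at h1
    omega
  refine ⟨?_, ?_, ?_⟩
  · -- MapsTo
    rintro α ⟨-, -, hn', -⟩
    refine ⟨fun i hi => by simp [hi], ?_⟩
    rw [Finset.sum_congr rfl (fun i hi => if_pos hi)]
    exact hn'
  · -- InjOn
    rintro a ⟨-, -, -, ha⟩ b ⟨-, -, -, hb⟩ hab
    funext i
    by_cases hi : i ∈ N
    · have := congrFun hab i
      simpa [hi] using this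
    · rw [ha i (Finset.mem_compl.mpr hi), hb i (Finset.mem_compl.mpr hi)]
  · -- SurjOn
    rintro θ ⟨hθ0, hθn⟩
    set α : Fin (d + 1) → ℕ := fun i => if i ∈ N then θ i else σ i with hα
    have hαN : ∑ i ∈ N, α i = n := by
      rw [← hθn]
      exact Finset.sum_congr rfl (fun i hi => by simp [hα, hi])
    have hαC : ∀ i ∈ Nᶜ, α i = σ i := by
      intro i hi
      simp [hα, Finset.mem_compl.mp hi]
    have hnk : n ≤ k := by
      rcases Nat.eq_zero_or_pos N.card with h0 | hpos
      · rw [Finset.card_eq_zero.mp h0] at hθn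
        simp at hθn
        omega
      · have := rmono hr N.card d hpos hsd le_rfl
        omega
    have hsumC : ∑ i ∈ Nᶜ, α i = k - n := by
      rw [Finset.sum_congr rfl hαC]
      exact hσsum
    have hsum : ∑ i, α i = k := by
      rw [← Finset.sum_add_sum_compl N α, hαN, hsumC]
      omega
    refine ⟨α, ⟨hsum, ⟨Or.inr (by rw [hαN]; exact hn), ?_⟩, hαN, hαC⟩, ?_⟩
    · -- the key maximality condition
      intro M hM1 hM2
      have hsplit : ∑ i ∈ M ∩ N, α i + ∑ i ∈ M \ N, α i = ∑ i ∈ M, α i :=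
        Finset.sum_inter_add_sum_sdiff M N α
      have hcard : (M ∩ N).card + (M \ N).card = M.card :=
        Finset.card_inter_add_card_sdiff M N
      have huleq : (M ∩ N).card ≤ N.card := Finset.card_le_card Finset.inter_subset_right
      have hdiffsub : M \ N ⊆ Nᶜ := fun i hi => by
        simp [Finset.mem_sdiff.mp hi |>.2]
      have hdiffσ : ∑ i ∈ M \ N, α i = ∑ i ∈ M \ N, σ i :=
        Finset.sum_congr rfl (fun i hi => hαC i (hdiffsub hi))
      have hccard : (Nᶜ : Finset (Fin (d + 1))).card = d + 1 - N.card := by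
        rw [Finset.card_compl]
        simp
      by_cases hd1 : M \ N = ∅
      · -- M ⊆ N, contradicts card
        have : M ⊆ N := by
          intro i hi
          by_contra hiN
          exact absurd (Finset.mem_sdiff.mpr ⟨hi, hiN⟩) (by simp [hd1])
        have := Finset.card_le_card this
        omega
      · have hne : (M \ N).Nonempty := Finset.nonempty_iff_ne_empty.mpr hd1
        by_cases hd2 : M \ N = Nᶜ
        · -- full complement: sum is k - n, big
          have hs1 : 1 ≤ N.card := by
            by_contra h
            have h0 : N.card = 0 := by omega
            have := hccard
            rw [hd2] at hcard
            omega
          have hrs : r N.card ≤ r d := rmono hr N.card d hs1 hsd le_rfl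
          have hrm : r M.card ≤ r d := rmono hr M.card d (by omega) hM2 le_rfl
          rw [← hsplit, hdiffσ, hd2, hσsum]
          omega
        · -- proper subset of complement: use hσsub
          have hss : M \ N ⊂ Nᶜ := Finset.ssubset_iff_subset_ne.mpr ⟨hdiffsub, hd2⟩
          have hB := hσsub (M \ N) hdiffsub hne hss
          simp only at hB
          have htle : (M \ N).card < (Nᶜ : Finset (Fin (d + 1))).card :=
            Finset.card_lt_card hss
          rcases Nat.lt_or_ge (M ∩ N).card N.card with hu | hu
          · -- u < s, doubling kicks in
            have hts : M.card + 1 ≤ (M \ N).card + N.card := by omega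
            have htsd : (M \ N).card + N.card ≤ d := by omega
            have h1 : 2 * r M.card ≤ r (M.card + 1) := hr M.card (by omega) (by omega)
            have h2 : r (M.card + 1) ≤ r ((M \ N).card + N.card) :=
              rmono hr _ _ (by omega) hts htsd
            have h3 : 2 * r N.card ≤ r (N.card + 1) := hr N.card (by omega) (by omega)
            have h4 : r (N.card + 1) ≤ r M.card := rmono hr _ _ (by omega) (by omega) hM2
            rw [← hsplit, hdiffσ]
            omega
          · -- u = s: M ⊇ N
            have huq : (M ∩ N).card = N.card := by omega
            have hMN : M ∩ N = N :=
              Finset.eq_of_subset_of_card_le Finset.inter_subset_right (by omega)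
            have hts2 : (M \ N).card + N.card = M.card := by omega
            have hA : ∑ i ∈ M ∩ N, α i = n := by rw [hMN]; exact hαN
            rw [← hsplit, hA, hdiffσ]
            rw [hts2] at hB
            omega
    · -- image equals θ
      funext i
      by_cases hi : i ∈ N
      · simp [hα, hi]
      · simp [hα, hi, hθ0 i hi]
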